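/- arXiv:2310.07136 — 2 statements merged into one kernel-verified Lean document; each statement's English description precedes it below -/
import Mathlib

section
/- Let U = exp(-i θ P / 2) where P is a Hermitian unitary matrix (P² = I, P† = P). Then for any fixed unitaries V, W and unit vector ψ and Hermitian matrix O, the function L(θ) = ⟨ψ| W† U(θ)† V† O V U(θ) W |ψ⟩ satisfies the parameter-shift rule: dL/dθ = (1/2)(L(θ + π/2) − L(θ − π/2)). -/
open Matrix Complex

/-! Since `P * P = 1`, the exponential series splits into `cosh` and `sinh` parts and
`exp (-iθP/2) = cos (θ/2) - i sin (θ/2) P`. Conjugating `A = V† O V` by this and using the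
half-angle formulas makes `U(θ)† A U(θ)` an affine combination `M₀ + cos θ • M₁ + sin θ • M₂`,
so `L` has the form `a + b cos θ + c sin θ`; for such a function
`(L (θ + π/2) - L (θ - π/2)) / 2 = c cos θ - b sin θ` is exactly the derivative. -/

section PauliRotation

variable {R : Type*} [Ring R] [Algebra ℂ R]

noncomputable def pauliRotation (P : R) (θ : ℝ) : R :=
  (Real.cos (θ / 2) : ℂ) • (1 : R) + (-(Real.sin (θ / 2) * I : ℂ)) • P

theorem NormedSpace.exp_smul_of_mul_self_eq_one [TopologicalSpace R] [IsTopologicalRing R]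
    [T2Space R] [ContinuousSMul ℂ R] {a : R} (ha : a * a = 1) (z : ℂ) :
    NormedSpace.exp (z • a) = cosh z • (1 : R) + sinh z • a := by
  have hpow (k : ℕ) : a ^ (2 * k) = 1 := by rw [pow_mul, sq, ha, one_pow]
  rw [NormedSpace.exp_eq_tsum ℂ]
  refine HasSum.tsum_eq (HasSum.even_add_odd ?_ ?_)
  · convert (hasSum_cosh z).smul_const (1 : R) using 2 with k
    rw [smul_pow, hpow, smul_smul, div_eq_inv_mul]
  · convert (hasSum_sinh z).smul_const a using 2 with k
    rw [smul_pow, pow_succ a, hpow, one_mul, smul_smul, div_eq_inv_mul]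

theorem NormedSpace.exp_neg_half_angle_smul_eq_pauliRotation [TopologicalSpace R]
    [IsTopologicalRing R] [T2Space R] [ContinuousSMul ℂ R] {P : R} (hP : P * P = 1) (θ : ℝ) :
    NormedSpace.exp ((-(θ : ℂ) * I / 2) • P) = pauliRotation P θ := by
  rw [pauliRotation, show -(θ : ℂ) * I / 2 = (-(θ / 2 : ℝ) : ℂ) * I by push_cast; ring,
    exp_smul_of_mul_self_eq_one hP, cosh_mul_I, sinh_mul_I, cos_neg, sin_neg, ofReal_cos,
    ofReal_sin, neg_mul]

theorem star_pauliRotation_mul_mul_pauliRotation [StarRing R] [StarModule ℂ R] {P : R}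
    (hP : IsSelfAdjoint P) (A : R) (θ : ℝ) :
    star (pauliRotation P θ) * A * pauliRotation P θ
      = (1 / 2 : ℂ) • (A + P * A * P) + (Real.cos θ : ℂ) • ((1 / 2 : ℂ) • (A - P * A * P))
        + (Real.sin θ : ℂ) • ((I / 2) • (P * A - A * P)) := by
  obtain ⟨φ, rfl⟩ : ∃ φ, θ = 2 * φ := ⟨θ / 2, by ring⟩
  have hcs : (Real.cos φ : ℂ) ^ 2 + (Real.sin φ : ℂ) ^ 2 = 1 := by
    exact_mod_cast Real.cos_sq_add_sin_sq φ
  have hcos : (Real.cos (2 * φ) : ℂ) = (Real.cos φ : ℂ) ^ 2 - (Real.sin φ : ℂ) ^ 2 := by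
    rw [Real.cos_two_mul']; push_cast; ring
  have hsin : (Real.sin (2 * φ) : ℂ) = 2 * (Real.sin φ : ℂ) * Real.cos φ := by
    rw [Real.sin_two_mul]; push_cast; ring
  rw [pauliRotation, mul_div_cancel_left₀ φ two_ne_zero, hcos, hsin]
  simp only [star_add, star_smul, star_one, hP.star_eq, star_neg, star_mul', Complex.star_def,
    conj_ofReal, conj_I, add_mul, mul_add, smul_mul_assoc, mul_smul_comm, one_mul, mul_one,
    smul_smul, mul_assoc]
  linear_combination (norm := module)
    (1 / 2 : ℂ) • hcs • (A + P * (A * P)) - (Real.sin φ : ℂ) ^ 2 • I_sq • (P * (A * P))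

end PauliRotation

theorem hasDerivAt_eq_half_sub_shift_of_eq_trig {f : ℝ → ℝ} {a b c : ℝ}
    (hf : ∀ t, f t = a + b * Real.cos t + c * Real.sin t) (θ : ℝ) :
    HasDerivAt f ((f (θ + Real.pi / 2) - f (θ - Real.pi / 2)) / 2) θ := by
  have hd := (((Real.hasDerivAt_cos θ).const_mul b).const_add a).add
    ((Real.hasDerivAt_sin θ).const_mul c)
  rw [funext hf]
  refine hd.congr_deriv ?_
  simp only [Real.cos_add, Real.sin_add, Real.cos_sub, Real.sin_sub, Real.cos_pi_div_two,
    Real.sin_pi_div_two]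
  ring

theorem parameter_shift_rule_general
    {n : ℕ} (P V W O : Matrix (Fin n) (Fin n) ℂ)
    (hPherm : P.IsHermitian) (hPunit : P * P = 1)
    (ψ : Fin n → ℂ)
    (U : ℝ → Matrix (Fin n) (Fin n) ℂ)
    (hU : ∀ θ : ℝ, U θ = NormedSpace.exp ((-(θ : ℂ) * Complex.I / 2) • P))
    (L : ℝ → ℝ)
    (hL : ∀ θ : ℝ,
      (L θ : ℂ) = star ψ ⬝ᵥ (Wᴴ * (U θ)ᴴ * Vᴴ * O * V * U θ * W).mulVec ψ) :
    ∀ θ : ℝ, HasDerivAt L ((L (θ + Real.pi / 2) - L (θ - Real.pi / 2)) / 2) θ := by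
  set A := Vᴴ * O * V
  set M₀ : Matrix (Fin n) (Fin n) ℂ := (1 / 2 : ℂ) • (A + P * A * P)
  set M₁ : Matrix (Fin n) (Fin n) ℂ := (1 / 2 : ℂ) • (A - P * A * P)
  set M₂ : Matrix (Fin n) (Fin n) ℂ := (I / 2) • (P * A - A * P)
  let q : Matrix (Fin n) (Fin n) ℂ → ℂ := fun M => star ψ ⬝ᵥ (Wᴴ * M * W) *ᵥ ψ
  have hconj (t : ℝ) : (U t)ᴴ * A * U t = M₀ + (Real.cos t : ℂ) • M₁ + (Real.sin t : ℂ) • M₂ := by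
    rw [hU, NormedSpace.exp_neg_half_angle_smul_eq_pauliRotation hPunit]
    exact star_pauliRotation_mul_mul_pauliRotation hPherm.isSelfAdjoint A t
  have hform (t : ℝ) : L t = (q M₀).re + (q M₁).re * Real.cos t + (q M₂).re * Real.sin t := by
    have h := congrArg re (hL t)
    rw [show Wᴴ * (U t)ᴴ * Vᴴ * O * V * U t * W = Wᴴ * ((U t)ᴴ * A * U t) * W by
      simp only [A, Matrix.mul_assoc], hconj] at h
    simp only [Matrix.mul_add, Matrix.add_mul, Matrix.mul_smul, Matrix.smul_mul, add_mulVec,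
      smul_mulVec, dotProduct_add, dotProduct_smul, smul_eq_mul, add_re, re_ofReal_mul,
      ofReal_re] at h
    rw [h]
    ring
  exact hasDerivAt_eq_half_sub_shift_of_eq_trig hform

/-- Parameter-shift rule: for `U θ = exp(-i θ P / 2)` with `P` Hermitian and unitary,
`L θ = ⟨ψ| W† U(θ)† V† O V U(θ) W |ψ⟩` satisfies
`dL/dθ = (L(θ + π/2) − L(θ − π/2)) / 2`. -/
theorem parameter_shift_rule
    {n : ℕ} (P V W O : Matrix (Fin n) (Fin n) ℂ)
    (hPherm : P.IsHermitian) (hPunit : P * P = 1)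
    (hV : V ∈ Matrix.unitaryGroup (Fin n) ℂ)
    (hW : W ∈ Matrix.unitaryGroup (Fin n) ℂ)
    (hO : O.IsHermitian)
    (ψ : Fin n → ℂ) (hψ : ∑ i, Complex.normSq (ψ i) = 1)
    (U : ℝ → Matrix (Fin n) (Fin n) ℂ)
    (hU : ∀ θ : ℝ, U θ = NormedSpace.exp ((-(θ : ℂ) * Complex.I / 2) • P))
    (L : ℝ → ℝ)
    (hL : ∀ θ : ℝ,
      (L θ : ℂ) = star ψ ⬝ᵥ (Wᴴ * (U θ)ᴴ * Vᴴ * O * V * U θ * W).mulVec ψ) :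
    ∀ θ : ℝ, HasDerivAt L ((L (θ + Real.pi / 2) - L (θ - Real.pi / 2)) / 2) θ :=
  parameter_shift_rule_general P V W O hPherm hPunit ψ U hU L hL
end

section
/- Let f: R^N → R^k be a linear map such that (1−ε)‖z−z′‖² ≤ ‖f(z)−f(z′)‖² ≤ (1+ε)‖z−z′‖² holds for all z, z′ ∈ {x, y, 0}, where x, y are unit vectors in R^N and 0 < ε ≤ 1. Then (1+ε)(x·y) − 2ε ≤ f(x)·f(y) ≤ (1−ε)(x·y) + 2ε. -/
open scoped RealInnerProductSpace

/-! By polarization `2⟪u, v⟫ = ‖u‖² + ‖v‖² - ‖u - v‖²`, and for unit vectors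
`‖x - y‖² = 2 - 2⟪x, y⟫`. Bounding the three squared norms on the image side in the
appropriate direction gives each inequality by linear arithmetic. -/

section ApproxInner

variable {E F : Type*} [NormedAddCommGroup E] [InnerProductSpace ℝ E]
  [NormedAddCommGroup F] [InnerProductSpace ℝ F] {x y : E} {u v : F} {ε : ℝ}

lemma norm_sub_sq_of_norm_eq_one (hx : ‖x‖ = 1) (hy : ‖y‖ = 1) :
    ‖x - y‖ ^ 2 = 2 - 2 * ⟪x, y⟫ := by
  rw [norm_sub_sq_real, hx, hy]
  ring

lemma inner_ge_of_norm_sq_bounds (hx : ‖x‖ = 1) (hy : ‖y‖ = 1)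
    (hu : 1 - ε ≤ ‖u‖ ^ 2) (hv : 1 - ε ≤ ‖v‖ ^ 2)
    (huv : ‖u - v‖ ^ 2 ≤ (1 + ε) * ‖x - y‖ ^ 2) :
    (1 + ε) * ⟪x, y⟫ - 2 * ε ≤ ⟪u, v⟫ := by
  rw [norm_sub_sq_of_norm_eq_one hx hy, norm_sub_sq_real] at huv
  linarith

lemma inner_le_of_norm_sq_bounds (hx : ‖x‖ = 1) (hy : ‖y‖ = 1)
    (hu : ‖u‖ ^ 2 ≤ 1 + ε) (hv : ‖v‖ ^ 2 ≤ 1 + ε)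
    (huv : (1 - ε) * ‖x - y‖ ^ 2 ≤ ‖u - v‖ ^ 2) :
    ⟪u, v⟫ ≤ (1 - ε) * ⟪x, y⟫ + 2 * ε := by
  rw [norm_sub_sq_of_norm_eq_one hx hy, norm_sub_sq_real] at huv
  linarith

end ApproxInner

theorem approx_isometry_inner_product_general
    {N k : ℕ} (x y : EuclideanSpace ℝ (Fin N))
    (hx : ‖x‖ = 1) (hy : ‖y‖ = 1)
    (ε : ℝ)
    (f : EuclideanSpace ℝ (Fin N) →ₗ[ℝ] EuclideanSpace ℝ (Fin k))
    (hiso : ∀ z ∈ ({x, y, 0} : Set (EuclideanSpace ℝ (Fin N))),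
      ∀ z' ∈ ({x, y, 0} : Set (EuclideanSpace ℝ (Fin N))),
        (1 - ε) * ‖z - z'‖ ^ 2 ≤ ‖f z - f z'‖ ^ 2 ∧
        ‖f z - f z'‖ ^ 2 ≤ (1 + ε) * ‖z - z'‖ ^ 2) :
    (1 + ε) * ⟪x, y⟫ - 2 * ε ≤ ⟪f x, f y⟫ ∧
    ⟪f x, f y⟫ ≤ (1 - ε) * ⟪x, y⟫ + 2 * ε := by
  obtain ⟨hfx_ge, hfx_le⟩ := hiso x (by simp) 0 (by simp)
  obtain ⟨hfy_ge, hfy_le⟩ := hiso y (by simp) 0 (by simp)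
  obtain ⟨hfxy_ge, hfxy_le⟩ := hiso x (by simp) y (by simp)
  simp only [map_zero, sub_zero, hx, hy, one_pow, mul_one] at hfx_ge hfx_le hfy_ge hfy_le
  exact ⟨inner_ge_of_norm_sq_bounds hx hy hfx_ge hfy_ge hfxy_le,
    inner_le_of_norm_sq_bounds hx hy hfx_le hfy_le hfxy_ge⟩

/-- Johnson–Lindenstrauss style inner-product preservation: if a linear map `f` approximately
preserves the pairwise squared distances among unit vectors `x`, `y` and `0`, then it
approximately preserves their inner product. -/
theorem approx_isometry_inner_product
    {N k : ℕ} (x y : EuclideanSpace ℝ (Fin N))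
    (hx : ‖x‖ = 1) (hy : ‖y‖ = 1)
    (ε : ℝ) (hε0 : 0 < ε) (hε1 : ε ≤ 1)
    (f : EuclideanSpace ℝ (Fin N) →ₗ[ℝ] EuclideanSpace ℝ (Fin k))
    (hiso : ∀ z ∈ ({x, y, 0} : Set (EuclideanSpace ℝ (Fin N))),
      ∀ z' ∈ ({x, y, 0} : Set (EuclideanSpace ℝ (Fin N))),
        (1 - ε) * ‖z - z'‖ ^ 2 ≤ ‖f z - f z'‖ ^ 2 ∧
        ‖f z - f z'‖ ^ 2 ≤ (1 + ε) * ‖z - z'‖ ^ 2) :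
    (1 + ε) * ⟪x, y⟫ - 2 * ε ≤ ⟪f x, f y⟫ ∧
    ⟪f x, f y⟫ ≤ (1 - ε) * ⟪x, y⟫ + 2 * ε :=
  approx_isometry_inner_product_general x y hx hy ε f hiso
end
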